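/- arXiv:0901.0870 — 3 statements merged into one kernel-verified Lean document; each statement's English description precedes it below -/
import Mathlib

section
/- Let R be a noncommutative Poisson ring. Then for all A, B, C, D ∈ R one has [A,B]·{C,D} = {A,B}·[C,D]. -/
/-- A noncommutative Poisson ring structure on a unital associative ring `R`:
a bracket that is additive in each argument, alternating, satisfies the
Jacobi identity and the Leibniz rule with respect to the ring product. -/
structure NCPoissonStructure (R : Type*) [Ring R] where
  bracket : R → R → R
  add_left : ∀ a b c : R, bracket (a + b) c = bracket a c + bracket b c
  add_right : ∀ a b c : R, bracket a (b + c) = bracket a b + bracket a c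
  alternating : ∀ a : R, bracket a a = 0
  jacobi : ∀ a b c : R,
    bracket a (bracket b c) + bracket b (bracket c a) + bracket c (bracket a b) = 0
  leibniz : ∀ a b c : R, bracket a (b * c) = bracket a b * c + b * bracket a c

lemma NCPoissonStructure.antisymm {R : Type*} [Ring R] (P : NCPoissonStructure R)
    (a b : R) : P.bracket a b = - P.bracket b a := by
  have h := P.alternating (a + b)
  rw [P.add_left, P.add_right, P.add_right, P.alternating, P.alternating] at h
  simp only [zero_add, add_zero] at h
  exact eq_neg_of_add_eq_zero_left h

lemma NCPoissonStructure.leibniz_left {R : Type*} [Ring R] (P : NCPoissonStructure R)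
    (a b c : R) : P.bracket (a * b) c = a * P.bracket b c + P.bracket a c * b := by
  rw [P.antisymm (a * b) c, P.leibniz, P.antisymm c a, P.antisymm c b]
  noncomm_ring

/-- In any noncommutative Poisson ring, `[A,B]·{C,D} = {A,B}·[C,D]`. -/
theorem commutator_mul_bracket_eq_bracket_mul_commutator
    {R : Type*} [Ring R] (P : NCPoissonStructure R) (A B C D : R) :
    (A * B - B * A) * P.bracket C D = P.bracket A B * (C * D - D * C) := by
  have h1 : P.bracket (A * C) (B * D)
      = (A * P.bracket C B + P.bracket A B * C) * D
        + B * (A * P.bracket C D + P.bracket A D * C) := by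
    rw [P.leibniz, P.leibniz_left, P.leibniz_left]
  have h2 : P.bracket (A * C) (B * D)
      = A * (P.bracket C B * D + B * P.bracket C D)
        + (P.bracket A B * D + B * P.bracket A D) * C := by
    rw [P.leibniz_left, P.leibniz, P.leibniz]
  have key := h2.symm.trans h1
  linear_combination (norm := noncomm_ring) key
end

section
/- Let R be a noncommutative Poisson ring and let (q_i)_{i∈I}, (p_i)_{i∈I} and (q̃_j)_{j∈J}, (p̃_j)_{j∈J} be two finite families of elements of R such that Σ_{i∈I} {q_i, p_i} = 1 and Σ_{j∈J} {q̃_j, p̃_j} = 1. Then Σ_{i∈I} [q_i, p_i] = Σ_{j∈J} [q̃_j, p̃_j]; i.e., the element Z := Σ_i [q_i, p_i] is independent of the chosen family. -/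
/-- The Farkas–Letzter identity: `{a,c}·[b,d] = [a,c]·{b,d}`. -/
lemma NCPoissonStructure.key {R : Type*} [Ring R] (P : NCPoissonStructure R)
    (a b c d : R) :
    P.bracket a c * (b * d - d * b) = (a * c - c * a) * P.bracket b d := by
  have e1 : P.bracket (a * b) (c * d)
      = (P.bracket a c * b + a * P.bracket b c) * d
        + c * (P.bracket a d * b + a * P.bracket b d) := by
    rw [P.leibniz, P.leibniz_left, P.leibniz_left]; noncomm_ring
  have e2 : P.bracket (a * b) (c * d)
      = a * (P.bracket b c * d + c * P.bracket b d)
        + (P.bracket a c * d + c * P.bracket a d) * b := by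
    rw [P.leibniz_left, P.leibniz, P.leibniz]
  have e3 := e1.symm.trans e2
  have h4 : P.bracket a c * (b * d - d * b) - (a * c - c * a) * P.bracket b d
      = ((P.bracket a c * b + a * P.bracket b c) * d
          + c * (P.bracket a d * b + a * P.bracket b d))
        - (a * (P.bracket b c * d + c * P.bracket b d)
          + (P.bracket a c * d + c * P.bracket a d) * b) := by
    noncomm_ring
  rw [e3, sub_self] at h4
  exact sub_eq_zero.mp h4

/-- The element `Z = ∑ i, [q i, p i]` is independent of the choice of finite families
with `∑ i, {q i, p i} = 1`. -/
theorem Z_independent_of_family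
    {R : Type*} [Ring R] (P : NCPoissonStructure R)
    {I : Type*} [Fintype I] (q p : I → R)
    (h : ∑ i, P.bracket (q i) (p i) = 1)
    {J : Type*} [Fintype J] (q' p' : J → R)
    (h' : ∑ j, P.bracket (q' j) (p' j) = 1) :
    ∑ i, (q i * p i - p i * q i) = ∑ j, (q' j * p' j - p' j * q' j) := by
  calc ∑ i, (q i * p i - p i * q i)
      = ∑ i, (q i * p i - p i * q i) * ∑ j, P.bracket (q' j) (p' j) := by
        rw [h']; simp
    _ = ∑ i, ∑ j, (q i * p i - p i * q i) * P.bracket (q' j) (p' j) := by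
        simp [Finset.mul_sum]
    _ = ∑ i, ∑ j, P.bracket (q i) (p i) * (q' j * p' j - p' j * q' j) := by
        refine Finset.sum_congr rfl fun i _ => Finset.sum_congr rfl fun j _ => ?_
        exact (P.key (q i) (q' j) (p i) (p' j)).symm
    _ = ∑ j, (∑ i, P.bracket (q i) (p i)) * (q' j * p' j - p' j * q' j) := by
        rw [Finset.sum_comm]; simp [Finset.sum_mul]
    _ = ∑ j, (q' j * p' j - p' j * q' j) := by rw [h]; simp
end

section
/- Let R be a noncommutative Poisson ring and let (q_i)_{i∈I}, (p_i)_{i∈I} be finite families of elements of R such that Σ_{i∈I} {q_i, p_i} = 1, and set Z := Σ_{i∈I} [q_i, p_i]. Then Z is central with respect to both products: for every A ∈ R one has {Z, A} = 0 and Z·A = A·Z. -/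
namespace NCPoissonStructure

variable {R : Type*} [Ring R] (P : NCPoissonStructure R)

def bracketLeft (c : R) : R →+ R :=
  AddMonoidHom.mk' (P.bracket · c) (fun a b => P.add_left a b c)

lemma sub_left (a b c : R) : P.bracket (a - b) c = P.bracket a c - P.bracket b c :=
  map_sub (P.bracketLeft c) a b

lemma sum_left {I : Type*} (s : Finset I) (f : I → R) (c : R) :
    P.bracket (∑ i ∈ s, f i) c = ∑ i ∈ s, P.bracket (f i) c :=
  map_sum (P.bracketLeft c) f s

lemma antisymm_s4 (a b : R) : P.bracket a b = -P.bracket b a := by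
  have h := P.alternating (a + b)
  rw [P.add_left, P.add_right, P.add_right, P.alternating, P.alternating, zero_add,
    add_zero] at h
  exact eq_neg_of_add_eq_zero_left h

lemma neg_left (a b : R) : P.bracket (-a) b = -P.bracket a b :=
  map_neg (P.bracketLeft b) a

lemma leibniz_left_s4 (a b c : R) :
    P.bracket (a * b) c = P.bracket a c * b + a * P.bracket b c := by
  rw [P.antisymm_s4, P.leibniz, P.antisymm_s4 c a, P.antisymm_s4 c b, neg_add, neg_mul, mul_neg,
    neg_neg, neg_neg]

lemma bracket_one_left (a : R) : P.bracket 1 a = 0 := by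
  have h := P.leibniz_left_s4 1 1 a
  simp only [mul_one, one_mul] at h
  exact left_eq_add.mp h

lemma jacobi_left (a b c : R) :
    P.bracket (P.bracket a c) b + P.bracket a (P.bracket b c) = P.bracket (P.bracket a b) c := by
  rw [P.antisymm_s4 a c, P.neg_left, P.antisymm_s4 _ b, neg_neg, P.antisymm_s4 (P.bracket a b) c]
  linear_combination (norm := abel) P.jacobi c a b

lemma bracket_commutator_left (a b c : R) :
    P.bracket (a * b - b * a) c =
      (P.bracket a c * b - b * P.bracket a c) + (a * P.bracket b c - P.bracket b c * a) := by
  rw [P.sub_left, P.leibniz_left_s4, P.leibniz_left_s4]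
  abel

lemma bracket_mul_commutator (a b c d : R) :
    P.bracket a c * (b * d - d * b) = (a * c - c * a) * P.bracket b d := by
  have h : P.bracket (a * b) (c * d) = P.bracket (a * b) (c * d) := rfl
  conv_lhs at h => rw [P.leibniz, P.leibniz_left_s4, P.leibniz_left_s4]
  conv_rhs at h => rw [P.leibniz_left_s4, P.leibniz, P.leibniz]
  simp only [add_mul, mul_add, mul_sub, sub_mul, mul_assoc] at h ⊢
  linear_combination (norm := abel) h

section Canonical

variable {I : Type*} [Fintype I] {q p : I → R} (h : ∑ i, P.bracket (q i) (p i) = 1)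
include h

lemma commutator_eq_mul_bracket (b d : R) :
    b * d - d * b = (∑ i, (q i * p i - p i * q i)) * P.bracket b d := by
  calc b * d - d * b = (∑ i, P.bracket (q i) (p i)) * (b * d - d * b) := by rw [h, one_mul]
    _ = ∑ i, (q i * p i - p i * q i) * P.bracket b d := by
      rw [Finset.sum_mul]
      exact Finset.sum_congr rfl fun i _ => P.bracket_mul_commutator (q i) b (p i) d
    _ = (∑ i, (q i * p i - p i * q i)) * P.bracket b d := by rw [Finset.sum_mul]

lemma bracket_commutator_eq_mul_bracket (a b c : R) :
    P.bracket (a * b - b * a) c =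
      (∑ i, (q i * p i - p i * q i)) * P.bracket (P.bracket a b) c := by
  rw [P.bracket_commutator_left, P.commutator_eq_mul_bracket h, P.commutator_eq_mul_bracket h,
    ← mul_add, P.jacobi_left]

lemma bracket_sum_commutator_eq_zero (A : R) :
    P.bracket (∑ i, (q i * p i - p i * q i)) A = 0 := by
  simp_rw [P.sum_left, P.bracket_commutator_eq_mul_bracket h]
  rw [← Finset.mul_sum, ← P.sum_left, h, P.bracket_one_left, mul_zero]

end Canonical

end NCPoissonStructure

/-- The element `Z = ∑ i, [q i, p i]` (where `∑ i, {q i, p i} = 1`) is central with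
respect to both the Lie product and the associative product. -/
theorem Z_central
    {R : Type*} [Ring R] (P : NCPoissonStructure R)
    {I : Type*} [Fintype I] (q p : I → R)
    (h : ∑ i, P.bracket (q i) (p i) = 1) (A : R) :
    P.bracket (∑ i, (q i * p i - p i * q i)) A = 0 ∧
    (∑ i, (q i * p i - p i * q i)) * A = A * (∑ i, (q i * p i - p i * q i)) := by
  have hZ := P.bracket_sum_commutator_eq_zero h A
  refine ⟨hZ, ?_⟩
  rw [← sub_eq_zero, P.commutator_eq_mul_bracket h, hZ, mul_zero]
end
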